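/- Suppose Assumption (Φ-convexity) holds for (p,λ) with λ > 0 and the local slope satisfies the global formula |∂φ|(x) = sup_{y≠x}[(φ(x)−φ(y))/d(x,y) + (λ/p)d^{p−1}(x,y)]₊. Then for every x in the domain of φ, φ(x) − inf_X φ ≤ |∂φ|^q(x)/(q·λ^{q/p}), where q = p/(p−1). -/

import Mathlib

/-!
If `φ x ≤ φ y` there is nothing to prove. Otherwise `y ≠ x`, and with `D = d x y` the quantity
`A = (φ x - φ y) / D + (λ / p) D^(p-1)` is one of the terms in the supremum defining `|∂φ|(x)`,
so `A ≤ |∂φ|(x)`. Since `A D - (λ / p) D^p = φ x - φ y`, Young's inequality applied to the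
product `(λ^(1/p) D) (A / λ^(1/p))` gives `φ x - φ y ≤ A^q / (q λ^(q/p)) ≤ |∂φ|^q(x) / (q λ^(q/p))`.
-/

open scoped ENNReal

/-- The nonnegative part of an extended real, as an extended nonnegative real. -/
noncomputable def erealPosPart (x : EReal) : ℝ≥0∞ :=
  if x = ⊤ then ⊤ else ENNReal.ofReal x.toReal

lemma erealPosPart_coe (r : ℝ) : erealPosPart r = ENNReal.ofReal r := by
  simp [erealPosPart]

theorem Real.young_inequality_of_nonneg_weighted {p q lam A D : ℝ} (hpq : p.HolderConjugate q)
    (hlam : 0 < lam) (hA : 0 ≤ A) (hD : 0 ≤ D) :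
    A * D - lam / p * D ^ p ≤ A ^ q / (q * lam ^ (q / p)) := by
  have hμ : 0 < lam ^ p⁻¹ := Real.rpow_pos_of_pos hlam _
  have hyoung := Real.young_inequality_of_nonneg (by positivity : 0 ≤ lam ^ p⁻¹ * D)
    (by positivity : 0 ≤ A / lam ^ p⁻¹) hpq
  have e1 : (lam ^ p⁻¹ * D) ^ p = lam * D ^ p := by
    rw [Real.mul_rpow hμ.le hD, ← Real.rpow_mul hlam.le, inv_mul_cancel₀ hpq.ne_zero,
      Real.rpow_one]
  have e2 : (A / lam ^ p⁻¹) ^ q = A ^ q / lam ^ (q / p) := by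
    rw [Real.div_rpow hA hμ.le, ← Real.rpow_mul hlam.le, inv_mul_eq_div]
  have e3 : lam ^ p⁻¹ * D * (A / lam ^ p⁻¹) = A * D := by field_simp
  rw [e1, e2, e3] at hyoung
  calc A * D - lam / p * D ^ p
      ≤ lam * D ^ p / p + A ^ q / lam ^ (q / p) / q - lam / p * D ^ p := by linarith
    _ = A ^ q / (q * lam ^ (q / p)) := by ring

theorem sub_le_rpow_div_of_slope {p q lam a b D : ℝ} (hpq : p.HolderConjugate q) (hlam : 0 < lam)
    (hD : 0 < D) (hA : 0 ≤ (a - b) * D⁻¹ + lam / p * D ^ (p - 1)) :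
    a - b ≤ ((a - b) * D⁻¹ + lam / p * D ^ (p - 1)) ^ q / (q * lam ^ (q / p)) := by
  have hAD : ((a - b) * D⁻¹ + lam / p * D ^ (p - 1)) * D = a - b + lam / p * D ^ p := by
    rw [add_mul, mul_assoc, inv_mul_cancel₀ hD.ne', mul_one, mul_assoc,
      ← Real.rpow_add_one hD.ne', sub_add_cancel]
  have := Real.young_inequality_of_nonneg_weighted hpq hlam hA hD.le
  rw [hAD] at this
  linarith

theorem ENNReal.ofReal_rpow_div_le {A c q : ℝ} {s : ℝ≥0∞} (hA : 0 ≤ A) (hq : 0 ≤ q) (hc : 0 < c)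
    (h : ENNReal.ofReal A ≤ s) : ENNReal.ofReal (A ^ q / c) ≤ s ^ q / ENNReal.ofReal c := by
  rw [ENNReal.ofReal_div_of_pos hc, ← ENNReal.ofReal_rpow_of_nonneg hA hq]
  gcongr

theorem EReal.coe_le_coe_add_coe_ennreal {a b t : ℝ} {c : ℝ≥0∞} (h : a ≤ b + t)
    (hc : ENNReal.ofReal t ≤ c) : (a : EReal) ≤ b + c :=
  calc (a : EReal) ≤ ((b + t : ℝ) : EReal) := EReal.coe_le_coe_iff.2 h
    _ = b + t := EReal.coe_add b t
    _ ≤ b + (ENNReal.ofReal t : EReal) := by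
        gcongr
        rw [EReal.coe_ennreal_ofReal]
        exact EReal.coe_le_coe_iff.2 (le_max_left t 0)
    _ ≤ b + c := by gcongr; exact_mod_cast hc

theorem stmt_17_general {X : Type*} (d : X → X → ℝ)
    -- asymmetric metric space axioms
    (hd_nonneg : ∀ x y, 0 ≤ d x y)
    (hd_eq : ∀ x y, d x y = 0 ↔ x = y)
    -- exponents and positive convexity parameter
    (p q lam : ℝ) (hp : 1 < p) (hq : q = p / (p - 1)) (hlam : 0 < lam)
    -- potential: proper, never −∞
    (φ : X → EReal) (hbot : ∀ x, φ x ≠ ⊥)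
    -- the local slope, given by the global formula (hypothesis)
    (S : X → ℝ≥0∞)
    (hS : ∀ x : X, φ x ≠ ⊤ →
      S x = ⨆ y : X, ⨆ _ : y ≠ x,
        erealPosPart ((φ x - φ y) * (((d x y)⁻¹ : ℝ) : EReal)
          + ((lam / p * d x y ^ (p - 1) : ℝ) : EReal))) :
    ∀ x : X, φ x ≠ ⊤ → ∀ y : X,
      φ x ≤ φ y + ((S x ^ q / ENNReal.ofReal (q * lam ^ (q / p)) : ℝ≥0∞) : EReal) := by
  intro x hx y
  rcases eq_or_ne (φ y) ⊤ with hy | hy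
  · simp [hy, EReal.top_add_of_ne_bot]
  lift φ x to ℝ using ⟨hx, hbot x⟩ with a ha
  lift φ y to ℝ using ⟨hy, hbot y⟩ with b hb
  rcases le_or_gt a b with hab | hab
  · exact le_add_of_le_of_nonneg (EReal.coe_le_coe_iff.2 hab) (EReal.coe_ennreal_nonneg _)
  have hpq : p.HolderConjugate q := (Real.holderConjugate_iff_eq_conjExponent hp).2 hq
  have hyx : y ≠ x := by rintro rfl; rw [← ha, EReal.coe_eq_coe_iff] at hb; linarith
  have hD : 0 < d x y := (hd_nonneg x y).lt_of_ne' fun h ↦ hyx ((hd_eq x y).1 h).symm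
  set A := (a - b) * (d x y)⁻¹ + lam / p * d x y ^ (p - 1) with hA_def
  have hA : 0 ≤ A := by
    have : 0 < (a - b) * (d x y)⁻¹ := mul_pos (by linarith) (inv_pos.2 hD)
    positivity
  have hslope : ENNReal.ofReal A ≤ S x := by
    rw [hS x (ha ▸ EReal.coe_ne_top a)]
    refine le_iSup₂_of_le y hyx (le_of_eq ?_)
    rw [← ha, ← hb, hA_def, ← erealPosPart_coe]
    norm_cast
  have hq0 : 0 < q := hpq.symm.pos
  exact EReal.coe_le_coe_add_coe_ennreal
    (le_add_of_sub_left_le (sub_le_rpow_div_of_slope hpq hlam hD hA))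
    (ENNReal.ofReal_rpow_div_le hA hq0.le (by positivity) hslope)

/-- If the local slope satisfies the global formula
`|∂φ|(x) = sup_{y≠x}[(φ(x)−φ(y))/d(x,y) + (λ/p)d^{p−1}(x,y)]₊` with `λ > 0`,
then `φ(x) − inf_X φ ≤ |∂φ|^q(x)/(q·λ^{q/p})` for every `x` in the domain of `φ`
(stated equivalently as `φ(x) ≤ φ(y) + |∂φ|^q(x)/(q·λ^{q/p})` for all `y`). -/
theorem stmt_17 {X : Type*} (d : X → X → ℝ)
    -- asymmetric metric space axioms
    (hd_nonneg : ∀ x y, 0 ≤ d x y)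
    (hd_eq : ∀ x y, d x y = 0 ↔ x = y)
    (hd_tri : ∀ x y z, d x z ≤ d x y + d y z)
    -- exponents and positive convexity parameter
    (p q lam : ℝ) (hp : 1 < p) (hq : q = p / (p - 1)) (hlam : 0 < lam)
    -- potential: proper, never −∞
    (φ : X → EReal) (hproper : ∃ x, φ x ≠ ⊤) (hbot : ∀ x, φ x ≠ ⊥)
    -- the local slope, given by the global formula (hypothesis)
    (S : X → ℝ≥0∞)
    (hS : ∀ x : X, φ x ≠ ⊤ →
      S x = ⨆ y : X, ⨆ _ : y ≠ x,
        erealPosPart ((φ x - φ y) * (((d x y)⁻¹ : ℝ) : EReal)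
          + ((lam / p * d x y ^ (p - 1) : ℝ) : EReal))) :
    ∀ x : X, φ x ≠ ⊤ → ∀ y : X,
      φ x ≤ φ y + ((S x ^ q / ENNReal.ofReal (q * lam ^ (q / p)) : ℝ≥0∞) : EReal) :=
  stmt_17_general d hd_nonneg hd_eq p q lam hp hq hlam φ hbot S hS
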